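/- Let X be a compact Hausdorff space, A a C(X)-algebra, Y and Z closed subsets of X with X = Y ∪ Z, and let B ⊆ A(Y) and E ⊆ A(Z) be C(X)-subalgebras such that π^Z_{Y∩Z}(E) ⊆ π^Y_{Y∩Z}(B). Define B ⊕_{Y∩Z} E := {a ∈ A : π_Y(a) ∈ B, π_Z(a) ∈ E}. Then the fibres of B ⊕_{Y∩Z} E are given by π_x(B ⊕_{Y∩Z} E) = π_x(B) if x ∈ X∖Z and π_x(B ⊕_{Y∩Z} E) = π_x(E) if x ∈ Z, and there is an exact sequence of C*-algebras 0 → {b ∈ B : π_{Y∩Z}(b) = 0} → B ⊕_{Y∩Z} E → E → 0, in which the surjection onto E is π_Z. -/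

import Mathlib

open scoped TensorProduct

noncomputable section

/-- The induced linear map `A ⊗[ℂ] B →ₗ[ℂ] T` coming from a pair of unital ⋆-homomorphisms. -/
def tensorLift {A B T : Type} [CStarAlgebra A] [CStarAlgebra B] [CStarAlgebra T]
    (ι₁ : A →⋆ₐ[ℂ] T) (ι₂ : B →⋆ₐ[ℂ] T) : A ⊗[ℂ] B →ₗ[ℂ] T :=
  TensorProduct.lift ((LinearMap.mul ℂ T).compl₁₂ ι₁.toAlgHom.toLinearMap ι₂.toAlgHom.toLinearMap)

/-- A realization of the minimal (spatial) tensor product of two unital C*-algebras `A` and `B`: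
a C*-algebra `T` together with commuting unital embeddings whose joint algebraic span is dense,
such that the corresponding C*-norm on the algebraic tensor product is a norm (injectivity),
and which is minimal among all such C*-completions. -/
structure MinimalTensorProduct (A B T : Type) [CStarAlgebra A] [CStarAlgebra B]
    [CStarAlgebra T] where
  ι₁ : A →⋆ₐ[ℂ] T
  ι₂ : B →⋆ₐ[ℂ] T
  commutes : ∀ a b, Commute (ι₁ a) (ι₂ b)
  tensor_inj : Function.Injective (tensorLift ι₁ ι₂)
  dense : DenseRange (tensorLift ι₁ ι₂)
  minimal : ∀ (T' : Type) [CStarAlgebra T'] (j₁ : A →⋆ₐ[ℂ] T') (j₂ : B →⋆ₐ[ℂ] T'),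
    (∀ a b, Commute (j₁ a) (j₂ b)) → Function.Injective (tensorLift j₁ j₂) →
    DenseRange (tensorLift j₁ j₂) →
    ∃ p : T' →⋆ₐ[ℂ] T, p.comp j₁ = ι₁ ∧ p.comp j₂ = ι₂

/-- Approximate unitary equivalence of two unital ⋆-homomorphisms. -/
def ApproxUnitarilyEquiv {A B : Type} [CStarAlgebra A] [CStarAlgebra B]
    (φ ψ : A →⋆ₐ[ℂ] B) : Prop :=
  ∀ (F : Finset A) (ε : ℝ), 0 < ε →
    ∃ u : unitary B, ∀ a ∈ F, ‖(u : B) * φ a * star (u : B) - ψ a‖ < ε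

/-- A separable unital C*-algebra `D ≠ ℂ` is strongly self-absorbing if there is an
isomorphism `D ≅ D ⊗ D` (minimal tensor product) which is approximately unitarily
equivalent to the first factor embedding `d ↦ d ⊗ 1`. -/
structure StronglySelfAbsorbing (D : Type) [CStarAlgebra D] : Prop where
  not_scalar : ∃ d : D, ∀ c : ℂ, d ≠ c • 1
  absorbing : ∀ (T : Type) [CStarAlgebra T] (tp : MinimalTensorProduct D D T),
    ∃ iso : D →⋆ₐ[ℂ] T, Function.Bijective iso ∧ ApproxUnitarilyEquiv iso tp.ι₁

/-- `A` is `D`-stable if `A ⊗ D ≅ A` (minimal tensor product). -/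
def DStable (D A : Type) [CStarAlgebra D] [CStarAlgebra A] : Prop :=
  ∀ (T : Type) [CStarAlgebra T], MinimalTensorProduct A D T →
    ∃ iso : A →⋆ₐ[ℂ] T, Function.Bijective iso

/-- The diagonal embedding `u ↦ diag(u,1,…,1)` of a unitary into the `(n+1) × (n+1)` matrices. -/
def unitaryDiagEmbed {D : Type} [CStarAlgebra D] (n : ℕ) (u : unitary D) :
    unitary (Matrix (Fin (n + 1)) (Fin (n + 1)) D) := by
  refine ⟨Matrix.diagonal (fun i => if i = 0 then (u : D) else 1), Unitary.mem_iff.mpr ⟨?_, ?_⟩⟩ <;>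
  · rw [Matrix.star_eq_conjTranspose, Matrix.diagonal_conjTranspose, Matrix.diagonal_mul_diagonal]
    ext i j
    by_cases hij : i = j
    · subst hij
      by_cases h0 : i = 0 <;>
        simp [h0, Matrix.diagonal_apply, Matrix.one_apply,
          Unitary.coe_star_mul_self, Unitary.coe_mul_star_self]
    · simp [Matrix.diagonal_apply, Matrix.one_apply, hij]

def K1Injective (D : Type) [CStarAlgebra D] : Prop :=
  ∀ (n : ℕ) (u : unitary D), Joined 1 (unitaryDiagEmbed n u) → Joined 1 u

/-- A linear map between complex star algebras is unital completely positive if it maps the unit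
to the unit and positive matrices to positive matrices of every size. -/
structure IsUCP {A B : Type} [Ring A] [Algebra ℂ A] [StarRing A]
    [Ring B] [Algebra ℂ B] [StarRing B] (φ : A →ₗ[ℂ] B) : Prop where
  unital : φ 1 = 1
  completelyPositive : ∀ (k : ℕ) (M : Matrix (Fin k) (Fin k) A),
    (∃ N : Matrix (Fin k) (Fin k) A, M = star N * N) → ∃ P : Matrix (Fin k) (Fin k) B, M.map φ = star P * P

/-- A completely positive contractive (c.p.c.) map between C*-algebras. -/
structure IsCPC {A B : Type} [CStarAlgebra A] [CStarAlgebra B] (φ : A →ₗ[ℂ] B) : Prop where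
  contractive : ∀ a, ‖φ a‖ ≤ ‖a‖
  completelyPositive : ∀ (k : ℕ) (M : Matrix (Fin k) (Fin k) A),
    (∃ N : Matrix (Fin k) (Fin k) A, M = star N * N) → ∃ P : Matrix (Fin k) (Fin k) B, M.map φ = star P * P

/-- Nuclearity of a C*-algebra, in the form of the completely positive approximation property. -/
def NuclearCStar (D : Type) [CStarAlgebra D] : Prop :=
  ∀ (F : Finset D) (ε : ℝ), 0 < ε →
    ∃ (k : ℕ) (φ : D →ₗ[ℂ] Matrix (Fin k) (Fin k) ℂ) (ψ : Matrix (Fin k) (Fin k) ℂ →ₗ[ℂ] D),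
      IsUCP φ ∧ IsUCP ψ ∧ ∀ d ∈ F, ‖ψ (φ d) - d‖ < ε

/-- The canonical copy of `C(X) ⊗ 1` inside `C(X) ⊗ D ≅ C(X,D)`. -/
def scalarCM {X : Type} [TopologicalSpace X] (D : Type) [CStarAlgebra D] (f : C(X, ℂ)) :
    C(X, D) :=
  ⟨fun x => f x • 1, by fun_prop⟩

/-- The ideal `J_Y = C₀(X \ Y) · A` of a `C(X)`-algebra `A` with structure map `μ`. -/
def vanishingIdeal {X A : Type} [TopologicalSpace X] [CStarAlgebra A]
    (μ : C(X, ℂ) →⋆ₐ[ℂ] A) (Y : Set X) : Set A :=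
  closure (Submodule.span ℂ
    {s : A | ∃ (f : C(X, ℂ)) (b : A), (∀ x ∈ Y, f x = 0) ∧ s = μ f * b} : Set A)

/-- `π : A → AY` is a realization of the restriction map `A → A(Y) = A/J_Y` of the
`C(X)`-algebra `A` onto the closed set `Y`. -/
structure IsRestriction {X A AY : Type} [TopologicalSpace X] [CStarAlgebra A] [CStarAlgebra AY]
    (μ : C(X, ℂ) →⋆ₐ[ℂ] A) (Y : Set X) (π : A →⋆ₐ[ℂ] AY) : Prop where
  surjective : Function.Surjective π
  ker : ∀ a : A, π a = 0 ↔ a ∈ vanishingIdeal μ Y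

/-- The covering dimension of `X` is at most `n`: every open cover admits an open refinement
(indexed the same way) of order at most `n + 1`. -/
def CoveringDimLE (X : Type) [TopologicalSpace X] (n : ℕ) : Prop :=
  ∀ (ι : Type) (U : ι → Set X), (∀ i, IsOpen (U i)) → (⋃ i, U i) = Set.univ →
    ∃ V : ι → Set X, (∀ i, IsOpen (V i)) ∧ (∀ i, V i ⊆ U i) ∧ (⋃ i, V i) = Set.univ ∧
      ∀ x : X, {i | x ∈ V i}.Finite ∧ {i | x ∈ V i}.ncard ≤ n + 1

/-- The covering dimension of `X`, an element of `ℕ∞` (equal to `⊤` iff `X` is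
infinite-dimensional). -/
def covDim (X : Type) [TopologicalSpace X] : ℕ∞ :=
  sInf ((↑) '' {n : ℕ | CoveringDimLE X n})

/-- A (not necessarily unital) `C(X)`-algebra structure, encoded by a central, multiplicative,
star- and norm-compatible module structure over `C(X)`. This is equivalent to a unital
⋆-homomorphism `C(X) → Z(M(A))` into the center of the multiplier algebra. -/
structure IsCXAlgebra (X : Type) [TopologicalSpace X] [CompactSpace X] (A : Type) [NonUnitalCStarAlgebra A]
    [Module C(X, ℂ) A] : Prop where
  smul_mul : ∀ (f : C(X, ℂ)) (a b : A), (f • a) * b = f • (a * b)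
  mul_smul : ∀ (f : C(X, ℂ)) (a b : A), a * (f • b) = f • (a * b)
  star_smul : ∀ (f : C(X, ℂ)) (a : A), star (f • a) = star f • star a
  norm_smul_le : ∀ (f : C(X, ℂ)) (a : A), ‖f • a‖ ≤ ‖f‖ * ‖a‖
  algebraMap_smul : ∀ (c : ℂ) (a : A), ((algebraMap ℂ C(X, ℂ)) c) • a = c • a

/-- The ideal `J_Y = C₀(X \ Y) · A` of a non-unital `C(X)`-algebra. -/
def vanishingIdeal' {X : Type} [TopologicalSpace X] {A : Type} [NonUnitalCStarAlgebra A]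
    [Module C(X, ℂ) A] (Y : Set X) : Set A :=
  closure (Submodule.span ℂ
    {s : A | ∃ (f : C(X, ℂ)) (b : A), (∀ x ∈ Y, f x = 0) ∧ s = f • b} : Set A)

/-- `π : A → AY` is a realization of the restriction map `A → A(Y) = A/J_Y` of the non-unital
`C(X)`-algebra `A` onto the closed set `Y`. -/
structure IsRestriction' {X : Type} [TopologicalSpace X] {A AY : Type}
    [NonUnitalCStarAlgebra A] [Module C(X, ℂ) A] [NonUnitalCStarAlgebra AY]
    (Y : Set X) (π : A →⋆ₙₐ[ℂ] AY) : Prop where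
  surjective : Function.Surjective π
  ker : ∀ a : A, π a = 0 ↔ a ∈ vanishingIdeal' Y

/-- The conclusion of the relative weak semiprojectivity property (Proposition 2.6 of the paper)
for the data `(D, G, δ, H, ε)`: whenever `A ⊆ B` is a unital inclusion of unital C*-algebras with
`A` being `D`-stable, every `(G,δ)`-multiplicative u.c.p. map `D → B` whose values on `G` lie
`δ`-close to `A` is `ε`-close on `H` to a unital ⋆-homomorphism `D → A`. -/
def RelWeakSemiproj (D : Type) [CStarAlgebra D] (G : Finset D) (δ : ℝ) (H : Finset D)
    (ε : ℝ) : Prop :=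
  ∀ (A B : Type) [CStarAlgebra A] [CStarAlgebra B] (ι : A →⋆ₐ[ℂ] B),
    Function.Injective ι → DStable D A →
    ∀ (φ : D →ₗ[ℂ] B), IsUCP φ →
      (∀ a ∈ G, ∀ b ∈ G, ‖φ (a * b) - φ a * φ b‖ < δ) →
      (∀ g ∈ G, ∃ a : A, ‖φ g - ι a‖ ≤ δ) →
      ∃ ψ : D →⋆ₐ[ℂ] A, ∀ d ∈ H, ‖φ d - ι (ψ d)‖ < ε

section AuxCX

open Set

set_option linter.unusedSectionVars false
variable {X : Type} [TopologicalSpace X] [CompactSpace X] [T2Space X]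
variable {A : Type} [NonUnitalCStarAlgebra A] [Module C(X, ℂ) A]

private lemma aux_gen_mem {W : Set X} (f : C(X, ℂ)) (a : A) (h : ∀ x ∈ W, f x = 0) :
    f • a ∈ vanishingIdeal' W :=
  subset_closure (Submodule.subset_span ⟨f, a, h, rfl⟩)

private lemma aux_zero_mem (W : Set X) : (0 : A) ∈ vanishingIdeal' W := by
  simpa using aux_gen_mem (W := W) (0 : C(X, ℂ)) (0 : A) (fun x _ => rfl)

private lemma aux_mem_iff {W : Set X} {a : A} :
    a ∈ vanishingIdeal' W ↔ a ∈ (Submodule.span ℂ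
      {s : A | ∃ (f : C(X, ℂ)) (b : A), (∀ x ∈ W, f x = 0) ∧ s = f • b}).topologicalClosure := by
  rw [← SetLike.mem_coe, Submodule.topologicalClosure_coe]
  rfl

private lemma aux_sub_mem {W : Set X} {a b : A} (ha : a ∈ vanishingIdeal' W)
    (hb : b ∈ vanishingIdeal' W) : a - b ∈ vanishingIdeal' W := by
  rw [aux_mem_iff] at ha hb ⊢
  exact Submodule.sub_mem _ ha hb

private lemma aux_isClosed (W : Set X) : IsClosed (vanishingIdeal' (A := A) W) :=
  isClosed_closure

private lemma aux_smul_smul (hA : IsCXAlgebra X A) (c : ℂ) (f : C(X, ℂ)) (a : A) :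
    c • (f • a) = f • (c • a) := by
  rw [← hA.algebraMap_smul c (f • a), ← mul_smul, mul_comm, mul_smul, hA.algebraMap_smul]

private lemma aux_lip (hA : IsCXAlgebra X A) (f : C(X, ℂ)) :
    LipschitzWith ‖f‖₊ (fun a : A => f • a) :=
  LipschitzWith.of_dist_le_mul fun a b => by
    simpa [dist_eq_norm, ← smul_sub] using hA.norm_smul_le f (a - b)

private lemma aux_smul_mem (hA : IsCXAlgebra X A) (f : C(X, ℂ)) {W : Set X} {w : A}
    (hw : w ∈ vanishingIdeal' W) : f • w ∈ vanishingIdeal' W := by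
  set G : Set A := {s : A | ∃ (g : C(X, ℂ)) (b : A), (∀ x ∈ W, g x = 0) ∧ s = g • b} with hG
  have hmaps : Set.MapsTo (fun a : A => f • a)
      ((Submodule.span ℂ G : Submodule ℂ A) : Set A)
      ((Submodule.span ℂ G : Submodule ℂ A) : Set A) := by
    intro a ha
    induction ha using Submodule.span_induction with
    | mem a h =>
      obtain ⟨g, b, hg, rfl⟩ := h
      show f • (g • b) ∈ _
      rw [← mul_smul]
      exact Submodule.subset_span ⟨f * g, b, fun x hx => by simp [hg x hx], rfl⟩
    | zero => simpa using Submodule.zero_mem _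
    | add a b _ _ ha hb => simpa [smul_add] using Submodule.add_mem _ ha hb
    | smul c a _ ha =>
      simpa [← aux_smul_smul hA c f a] using Submodule.smul_mem _ c ha
  exact hmaps.closure (aux_lip hA f).continuous hw

private lemma aux_rep (hA : IsCXAlgebra X A) {W : Set X} {s : A}
    (hs : s ∈ Submodule.span ℂ
      {s : A | ∃ (f : C(X, ℂ)) (b : A), (∀ x ∈ W, f x = 0) ∧ s = f • b}) :
    ∃ (n : ℕ) (F : Fin n → C(X, ℂ)) (Bv : Fin n → A),
      (∀ i, ∀ x ∈ W, F i x = 0) ∧ s = ∑ i, F i • Bv i := by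
  obtain ⟨n, c, g, hg⟩ := Submodule.mem_span_set'.mp hs
  choose F Bv hF hFB using fun i => (g i).2
  refine ⟨n, F, fun i => c i • Bv i, hF, ?_⟩
  rw [← hg]
  refine Finset.sum_congr rfl fun i _ => ?_
  rw [hFB i, aux_smul_smul hA]

private lemma aux_key (hA : IsCXAlgebra X A) {W : Set X} (hW : IsClosed W) {w : A}
    (hw : w ∈ vanishingIdeal' W) {ε : ℝ} (hε : 0 < ε) :
    ∃ (f : C(X, ℂ)) (C : Set X), IsClosed C ∧ Disjoint C W ∧
      (∀ x, x ∉ C → f x = 0) ∧ (∀ x, ∃ t : ℝ, 0 ≤ t ∧ t ≤ 1 ∧ f x = t) ∧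
      ‖f‖ ≤ 1 ∧ ‖w - f • w‖ < ε := by
  obtain ⟨s, hsmem, hsdist⟩ := Metric.mem_closure_iff.mp hw (ε / 3) (by positivity)
  obtain ⟨n, F, Bv, hF, rfl⟩ := aux_rep hA hsmem
  set M : ℝ := ∑ i, ‖Bv i‖ with hM
  have hM0 : 0 ≤ M := Finset.sum_nonneg fun i _ => norm_nonneg _
  set δ : ℝ := ε / (3 * (M + 1)) with hδdef
  have hδ : 0 < δ := by positivity
  set K : Set X := ⋃ i : Fin n, {x | δ ≤ ‖F i x‖} with hK
  have hKclosed : IsClosed K :=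
    isClosed_iUnion_of_finite fun i => isClosed_le continuous_const (F i).continuous.norm
  have hdisWK : Disjoint W K := by
    rw [Set.disjoint_left]
    rintro x hxW hxK
    obtain ⟨i, hi⟩ := Set.mem_iUnion.mp hxK
    rw [Set.mem_setOf_eq, hF i x hxW] at hi
    simp at hi
    exact absurd hi (not_le.mpr hδ)
  obtain ⟨h, hh0, hh1, hh01⟩ := exists_continuous_zero_one_of_isClosed hW hKclosed hdisWK
  set φ : C(ℝ, ℝ) := ⟨fun t => max (2 * t - 1) 0, by fun_prop⟩ with hφ
  set f0 : C(X, ℝ) := φ.comp h with hf0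
  set f : C(X, ℂ) := ⟨fun x => (f0 x : ℂ), Complex.continuous_ofReal.comp f0.continuous⟩ with hf
  have hf0val : ∀ x, f0 x = max (2 * h x - 1) 0 := fun x => rfl
  have hfval : ∀ x, f x = ((f0 x : ℝ) : ℂ) := fun x => rfl
  have hrange : ∀ x, ∃ t : ℝ, 0 ≤ t ∧ t ≤ 1 ∧ f x = t := by
    intro x
    refine ⟨f0 x, le_max_right _ _, ?_, rfl⟩
    rw [hf0val]
    exact max_le (by linarith [(hh01 x).2]) zero_le_one
  have hnorm1 : ‖f‖ ≤ 1 := by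
    rw [ContinuousMap.norm_le _ zero_le_one]
    intro x
    obtain ⟨t, ht0, ht1, hxt⟩ := hrange x
    rw [hxt, Complex.norm_real, Real.norm_eq_abs, abs_of_nonneg ht0]
    exact ht1
  have hfK : ∀ x ∈ K, f x = 1 := by
    intro x hx
    rw [hfval, hf0val, hh1 hx]
    norm_num
  refine ⟨f, {x | (1:ℝ)/2 ≤ h x}, isClosed_le continuous_const h.continuous, ?_, ?_, hrange,
    hnorm1, ?_⟩
  · rw [Set.disjoint_left]
    intro x hx hxW
    rw [Set.mem_setOf_eq, hh0 hxW] at hx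
    norm_num at hx
  · intro x hx
    rw [Set.mem_setOf_eq, not_le] at hx
    rw [hfval, hf0val]
    rw [max_eq_right (by linarith)]
    norm_num
  · -- the norm estimate
    set s : A := ∑ i, F i • Bv i with hs
    have hkey : ∀ i : Fin n, ‖F i - f * F i‖ ≤ δ := by
      intro i
      rw [ContinuousMap.norm_le _ hδ.le]
      intro x
      by_cases hx : x ∈ K
      · simpa [hfK x hx] using hδ.le
      · have hx' : ‖F i x‖ < δ := by
          rw [hK, Set.mem_iUnion] at hx
          push_neg at hx
          exact not_le.mp (hx i)
        have h1f : ‖1 - f x‖ ≤ 1 := by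
          obtain ⟨t, ht0, ht1, hxt⟩ := hrange x
          rw [hxt]
          rw [show (1 : ℂ) - (t : ℝ) = ((1 - t : ℝ) : ℂ) by push_cast; ring]
          rw [Complex.norm_real, Real.norm_eq_abs, abs_of_nonneg (by linarith)]
          linarith
        have : (F i - f * F i) x = (1 - f x) * F i x := by
          simp [ContinuousMap.sub_apply, ContinuousMap.mul_apply]
          ring
        rw [this, norm_mul]
        calc ‖1 - f x‖ * ‖F i x‖ ≤ 1 * δ := by
              apply mul_le_mul h1f hx'.le (norm_nonneg _) zero_le_one
          _ = δ := one_mul δ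
    have hsfs : ‖s - f • s‖ ≤ δ * M := by
      have heq : s - f • s = ∑ i, (F i - f * F i) • Bv i := by
        rw [hs, Finset.smul_sum, ← Finset.sum_sub_distrib]
        refine Finset.sum_congr rfl fun i _ => ?_
        rw [← mul_smul, ← sub_smul]
      rw [heq]
      calc ‖∑ i, (F i - f * F i) • Bv i‖ ≤ ∑ i, ‖(F i - f * F i) • Bv i‖ :=
            norm_sum_le _ _
        _ ≤ ∑ i, δ * ‖Bv i‖ := Finset.sum_le_sum fun i _ => le_trans
            (hA.norm_smul_le _ _) (mul_le_mul_of_nonneg_right (hkey i) (norm_nonneg _))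
        _ = δ * M := by rw [hM, Finset.mul_sum]
    have hδM : δ * M ≤ ε / 3 := by
      calc δ * M ≤ δ * (M + 1) := by nlinarith
        _ = ε / 3 := by rw [hδdef]; field_simp
    have hws : ‖w - s‖ < ε / 3 := by rwa [← dist_eq_norm]
    have hfsw : ‖f • s - f • w‖ ≤ ε / 3 := by
      rw [← smul_sub]
      calc ‖f • (s - w)‖ ≤ ‖f‖ * ‖s - w‖ := hA.norm_smul_le _ _
        _ ≤ 1 * (ε / 3) := by
            apply mul_le_mul hnorm1 _ (norm_nonneg _) zero_le_one
            rw [norm_sub_rev]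
            exact hws.le
        _ = ε / 3 := one_mul _
    calc ‖w - f • w‖ = ‖(w - s) + ((s - f • s) + (f • s - f • w))‖ := by abel_nf
      _ ≤ ‖w - s‖ + (‖s - f • s‖ + ‖f • s - f • w‖) :=
          le_trans (norm_add_le _ _) (by gcongr; exact norm_add_le _ _)
      _ < ε := by linarith

private lemma aux_split {Y Z : Set X} (hY : IsClosed Y) (hZ : IsClosed Z)
    (f : C(X, ℂ)) {C : Set X} (hC : IsClosed C) (hCW : Disjoint C (Y ∩ Z))
    (hsupp : ∀ x, x ∉ C → f x = 0) :
    ∃ g g' : C(X, ℂ), f = g + g' ∧ (∀ x ∈ Y, g x = 0) ∧ (∀ x ∈ Z, g' x = 0) ∧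
      ‖g‖ ≤ ‖f‖ ∧ ‖g'‖ ≤ ‖f‖ := by
  have hdis : Disjoint (C ∩ Y) (C ∩ Z) := by
    rw [Set.disjoint_left]
    rintro x ⟨hxC, hxY⟩ ⟨-, hxZ⟩
    exact Set.disjoint_left.mp hCW hxC ⟨hxY, hxZ⟩
  obtain ⟨k, hk0, hk1, hk01⟩ := exists_continuous_zero_one_of_isClosed
    (hC.inter hY) (hC.inter hZ) hdis
  set kC : C(X, ℂ) := ⟨fun x => ((k x : ℝ) : ℂ), Complex.continuous_ofReal.comp k.continuous⟩
    with hkC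
  refine ⟨kC * f, (1 - kC) * f, by ring, ?_, ?_, ?_, ?_⟩
  · intro x hx
    by_cases hxC : x ∈ C
    · show kC x * f x = 0
      have : k x = 0 := hk0 ⟨hxC, hx⟩
      simp [hkC, this]
    · show kC x * f x = 0
      rw [hsupp x hxC, mul_zero]
  · intro x hx
    by_cases hxC : x ∈ C
    · show (1 - kC x) * f x = 0
      have : k x = 1 := hk1 ⟨hxC, hx⟩
      simp [hkC, this]
    · show (1 - kC x) * f x = 0
      rw [hsupp x hxC, mul_zero]
  · rw [ContinuousMap.norm_le _ (norm_nonneg f)]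
    intro x
    show ‖kC x * f x‖ ≤ ‖f‖
    rw [norm_mul]
    calc ‖kC x‖ * ‖f x‖ ≤ 1 * ‖f‖ := by
          apply mul_le_mul _ (f.norm_coe_le_norm x) (norm_nonneg _) zero_le_one
          show ‖((k x : ℝ) : ℂ)‖ ≤ 1
          rw [Complex.norm_real, Real.norm_eq_abs, abs_of_nonneg (hk01 x).1]
          exact (hk01 x).2
      _ = ‖f‖ := one_mul _
  · rw [ContinuousMap.norm_le _ (norm_nonneg f)]
    intro x
    show ‖(1 - kC x) * f x‖ ≤ ‖f‖
    rw [norm_mul]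
    calc ‖1 - kC x‖ * ‖f x‖ ≤ 1 * ‖f‖ := by
          apply mul_le_mul _ (f.norm_coe_le_norm x) (norm_nonneg _) zero_le_one
          show ‖1 - ((k x : ℝ) : ℂ)‖ ≤ 1
          rw [show (1 : ℂ) - ((k x : ℝ) : ℂ) = ((1 - k x : ℝ) : ℂ) by push_cast; ring]
          rw [Complex.norm_real, Real.norm_eq_abs, abs_of_nonneg (by linarith [(hk01 x).2])]
          linarith [(hk01 x).1]
      _ = ‖f‖ := one_mul _

private lemma aux_step (hA : IsCXAlgebra X A) {Y Z : Set X} (hY : IsClosed Y) (hZ : IsClosed Z)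
    {w : A} (hw : w ∈ vanishingIdeal' (Y ∩ Z)) :
    ∃ u v : A, u ∈ vanishingIdeal' Y ∧ v ∈ vanishingIdeal' Z ∧
      ‖u‖ ≤ ‖w‖ ∧ ‖v‖ ≤ ‖w‖ ∧ (w - u - v) ∈ vanishingIdeal' (Y ∩ Z) ∧
      ‖w - u - v‖ ≤ ‖w‖ / 2 := by
  by_cases hw0 : w = 0
  · subst hw0
    refine ⟨0, 0, aux_zero_mem Y, aux_zero_mem Z, by simp, by simp, by simpa using hw, by simp⟩
  · have hnw : 0 < ‖w‖ := norm_pos_iff.mpr hw0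
    obtain ⟨f, C, hC, hCW, hsupp, hrange, hnorm1, herr⟩ :=
      aux_key hA (hY.inter hZ) hw (show 0 < ‖w‖ / 2 by positivity)
    obtain ⟨g, g', hfgg, hgY, hgZ, hgle, hg'le⟩ := aux_split hY hZ f hC hCW hsupp
    refine ⟨g • w, g' • w, aux_gen_mem g w hgY, aux_gen_mem g' w hgZ, ?_, ?_, ?_, ?_⟩
    · calc ‖g • w‖ ≤ ‖g‖ * ‖w‖ := hA.norm_smul_le _ _
        _ ≤ 1 * ‖w‖ := by
            apply mul_le_mul (le_trans hgle hnorm1) le_rfl (norm_nonneg _) zero_le_one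
        _ = ‖w‖ := one_mul _
    · calc ‖g' • w‖ ≤ ‖g'‖ * ‖w‖ := hA.norm_smul_le _ _
        _ ≤ 1 * ‖w‖ := by
            apply mul_le_mul (le_trans hg'le hnorm1) le_rfl (norm_nonneg _) zero_le_one
        _ = ‖w‖ := one_mul _
    · have : w - g • w - g' • w = w - f • w := by
        rw [hfgg, add_smul]; abel
      rw [this]
      exact aux_sub_mem hw (aux_smul_mem hA f hw)
    · have : w - g • w - g' • w = w - f • w := by
        rw [hfgg, add_smul]; abel
      rw [this]
      exact herr.le

private lemma aux_decomp (hA : IsCXAlgebra X A) {Y Z : Set X} (hY : IsClosed Y)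
    (hZ : IsClosed Z) {w : A} (hw : w ∈ vanishingIdeal' (Y ∩ Z)) :
    ∃ u ∈ vanishingIdeal' Y, ∃ v ∈ vanishingIdeal' Z, w = u + v := by
  classical
  have step : ∀ r : A, ∃ p : A × A, p.1 ∈ vanishingIdeal' Y ∧ p.2 ∈ vanishingIdeal' Z ∧
      (r ∈ vanishingIdeal' (Y ∩ Z) → ((r - p.1 - p.2) ∈ vanishingIdeal' (Y ∩ Z) ∧
        ‖p.1‖ ≤ ‖r‖ ∧ ‖p.2‖ ≤ ‖r‖ ∧ ‖r - p.1 - p.2‖ ≤ ‖r‖ / 2)) := by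
    intro r
    by_cases hr : r ∈ vanishingIdeal' (Y ∩ Z)
    · obtain ⟨u, v, h1, h2, h3, h4, h5, h6⟩ := aux_step hA hY hZ hr
      exact ⟨(u, v), h1, h2, fun _ => ⟨h5, h3, h4, h6⟩⟩
    · exact ⟨(0, 0), aux_zero_mem Y, aux_zero_mem Z, fun h => absurd h hr⟩
  choose P hP1 hP2 hP3 using step
  set r : ℕ → A := fun n => Nat.rec w (fun _ prev => prev - (P prev).1 - (P prev).2) n
    with hr_def
  have hrrec : ∀ n, r (n + 1) = r n - (P (r n)).1 - (P (r n)).2 := fun n => rfl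
  have hr0 : r 0 = w := rfl
  have hmem : ∀ n, r n ∈ vanishingIdeal' (Y ∩ Z) := by
    intro n
    induction n with
    | zero => exact hw
    | succ n ih => rw [hrrec]; exact (hP3 _ ih).1
  have hnorm : ∀ n, ‖r n‖ ≤ ‖w‖ * (1 / 2) ^ n := by
    intro n
    induction n with
    | zero => simp [hr0]
    | succ n ih =>
      rw [hrrec]
      calc ‖r n - (P (r n)).1 - (P (r n)).2‖ ≤ ‖r n‖ / 2 := (hP3 _ (hmem n)).2.2.2
        _ ≤ (‖w‖ * (1 / 2) ^ n) / 2 := by linarith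
        _ = ‖w‖ * (1 / 2) ^ (n + 1) := by ring
  have hgeo : Summable (fun n : ℕ => ‖w‖ * (1 / 2) ^ n) :=
    (summable_geometric_of_lt_one (by norm_num) (by norm_num)).mul_left ‖w‖
  have hbndy : ∀ n, ‖(P (r n)).1‖ ≤ ‖w‖ * (1 / 2) ^ n :=
    fun n => le_trans (hP3 _ (hmem n)).2.1 (hnorm n)
  have hbndz : ∀ n, ‖(P (r n)).2‖ ≤ ‖w‖ * (1 / 2) ^ n :=
    fun n => le_trans (hP3 _ (hmem n)).2.2.1 (hnorm n)
  have hsumy : Summable (fun n => (P (r n)).1) := Summable.of_norm_bounded hgeo hbndy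
  have hsumz : Summable (fun n => (P (r n)).2) := Summable.of_norm_bounded hgeo hbndz
  set u : A := ∑' n, (P (r n)).1 with hu
  set v : A := ∑' n, (P (r n)).2 with hv
  have hmemJ : ∀ (Wset : Set X) (y : ℕ → A), (∀ n, y n ∈ vanishingIdeal' Wset) →
      Summable y → (∑' n, y n) ∈ vanishingIdeal' Wset := by
    intro Wset y hy hsum
    have hclosed : IsClosed (vanishingIdeal' (A := A) Wset) := aux_isClosed Wset
    refine hclosed.mem_of_tendsto hsum.hasSum.tendsto_sum_nat
      (Filter.Eventually.of_forall fun n => ?_)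
    rw [aux_mem_iff]
    exact Submodule.sum_mem _ fun i _ => aux_mem_iff.mp (hy i)
  have huY : u ∈ vanishingIdeal' Y := hmemJ Y _ (fun n => hP1 (r n)) hsumy
  have hvZ : v ∈ vanishingIdeal' Z := hmemJ Z _ (fun n => hP2 (r n)) hsumz
  refine ⟨u, huY, v, hvZ, ?_⟩
  have hpartial : ∀ n, (∑ i ∈ Finset.range n, ((P (r i)).1 + (P (r i)).2)) = w - r n := by
    intro n
    induction n with
    | zero => simp [hr0]
    | succ n ih =>
      rw [Finset.sum_range_succ, ih, hrrec]
      abel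
  have hrlim : Filter.Tendsto r Filter.atTop (nhds 0) := by
    apply squeeze_zero_norm hnorm
    simpa using (tendsto_pow_atTop_nhds_zero_of_lt_one (by norm_num : (0:ℝ) ≤ 1/2)
      (by norm_num)).const_mul ‖w‖
  have hlim1 : Filter.Tendsto (fun n => ∑ i ∈ Finset.range n, ((P (r i)).1 + (P (r i)).2))
      Filter.atTop (nhds (w - 0)) := by
    simp only [hpartial]
    exact Filter.Tendsto.const_sub w hrlim
  have hlim2 : Filter.Tendsto (fun n => ∑ i ∈ Finset.range n, ((P (r i)).1 + (P (r i)).2))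
      Filter.atTop (nhds (u + v)) := by
    have h1 := hsumy.hasSum.tendsto_sum_nat
    have h2 := hsumz.hasSum.tendsto_sum_nat
    have := h1.add h2
    simpa [Finset.sum_add_distrib] using this
  have := tendsto_nhds_unique hlim1 hlim2
  rw [sub_zero] at this
  exact this

private lemma aux_inter (hA : IsCXAlgebra X A) {Y Z : Set X} (hY : IsClosed Y)
    (hZ : IsClosed Z) (hYZ : Y ∪ Z = Set.univ) {w : A}
    (h1 : w ∈ vanishingIdeal' Y) (h2 : w ∈ vanishingIdeal' Z) : w = 0 := by
  by_contra h0
  have hnw : 0 < ‖w‖ := norm_pos_iff.mpr h0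
  obtain ⟨f, Cf, _, hdisf, hsuppf, _, hfle, hferr⟩ :=
    aux_key hA hY h1 (show 0 < ‖w‖ / 2 by positivity)
  obtain ⟨g, Cg, _, hdisg, hsuppg, _, hgle, hgerr⟩ :=
    aux_key hA hZ h2 (show 0 < ‖w‖ / 2 by positivity)
  have hfY : ∀ x ∈ Y, f x = 0 :=
    fun x hx => hsuppf x (fun hc => Set.disjoint_left.mp hdisf hc hx)
  have hgZ : ∀ x ∈ Z, g x = 0 :=
    fun x hx => hsuppg x (fun hc => Set.disjoint_left.mp hdisg hc hx)
  have hfg : f * g = 0 := by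
    ext x
    have hx : x ∈ Y ∪ Z := by rw [hYZ]; trivial
    rcases hx with hx | hx
    · show f x * g x = 0
      rw [hfY x hx, zero_mul]
    · show f x * g x = 0
      rw [hgZ x hx, mul_zero]
  have hfgw : f • (g • w) = 0 := by rw [← mul_smul, hfg, zero_smul]
  have hkey : ‖w‖ ≤ ‖w - f • w‖ + ‖f • (w - g • w)‖ := by
    have heq : w = (w - f • w) + f • (w - g • w) := by
      rw [smul_sub, hfgw]
      abel
    calc ‖w‖ = ‖(w - f • w) + f • (w - g • w)‖ := by rw [← heq]
      _ ≤ ‖w - f • w‖ + ‖f • (w - g • w)‖ := norm_add_le _ _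
  have h3 : ‖f • (w - g • w)‖ ≤ ‖w - g • w‖ := by
    calc ‖f • (w - g • w)‖ ≤ ‖f‖ * ‖w - g • w‖ := hA.norm_smul_le _ _
      _ ≤ 1 * ‖w - g • w‖ := by
          apply mul_le_mul hfle le_rfl (norm_nonneg _) zero_le_one
      _ = ‖w - g • w‖ := one_mul _
  linarith

end AuxCX


open TopologicalSpace in
/-- Lemma 2.3 of the paper: the fibres of `B ⊕_{Y∩Z} E = {a ∈ A : π_Y(a) ∈ B, π_Z(a) ∈ E}` and
the exact sequence `0 → {b ∈ B : π_{Y∩Z}(b) = 0} → B ⊕_{Y∩Z} E → E → 0`. -/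
theorem stmt_3 (X : Type) [TopologicalSpace X] [CompactSpace X] [T2Space X]
    (A : Type) [NonUnitalCStarAlgebra A] [Module C(X, ℂ) A] (hA : IsCXAlgebra X A)
    (Y Z : Set X) (hY : IsClosed Y) (hZ : IsClosed Z) (hYZ : Y ∪ Z = Set.univ)
    -- restrictions of A to Y, Z and Y ∩ Z
    (AY AZ AW : Type) [NonUnitalCStarAlgebra AY] [NonUnitalCStarAlgebra AZ]
    [NonUnitalCStarAlgebra AW]
    (πY : A →⋆ₙₐ[ℂ] AY) (hAY : IsRestriction' Y πY)
    (πZ : A →⋆ₙₐ[ℂ] AZ) (hAZ : IsRestriction' Z πZ)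
    (πW : A →⋆ₙₐ[ℂ] AW) (hAW : IsRestriction' (Y ∩ Z) πW)
    (πYW : AY →⋆ₙₐ[ℂ] AW) (hπYW : πYW.comp πY = πW)
    (πZW : AZ →⋆ₙₐ[ℂ] AW) (hπZW : πZW.comp πZ = πW)
    -- the fibres of A
    (Afib : X → Type) [∀ x, NonUnitalCStarAlgebra (Afib x)]
    (πfib : ∀ x : X, A →⋆ₙₐ[ℂ] Afib x) (hfib : ∀ x : X, IsRestriction' {x} (πfib x))
    (πYx : ∀ x : X, x ∈ Y → (AY →⋆ₙₐ[ℂ] Afib x))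
    (hπYx : ∀ (x : X) (hx : x ∈ Y), (πYx x hx).comp πY = πfib x)
    (πZx : ∀ x : X, x ∈ Z → (AZ →⋆ₙₐ[ℂ] Afib x))
    (hπZx : ∀ (x : X) (hx : x ∈ Z), (πZx x hx).comp πZ = πfib x)
    -- C(X)-subalgebras B ⊆ A(Y) and E ⊆ A(Z)
    (B : NonUnitalStarSubalgebra ℂ AY) (hBclosed : IsClosed (B : Set AY))
    (hBmod : ∀ (f : C(X, ℂ)) (a : A), πY a ∈ B → πY (f • a) ∈ B)
    (E : NonUnitalStarSubalgebra ℂ AZ) (hEclosed : IsClosed (E : Set AZ))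
    (hEmod : ∀ (f : C(X, ℂ)) (a : A), πZ a ∈ E → πZ (f • a) ∈ E)
    -- the hypothesis π^Z_{Y∩Z}(E) ⊆ π^Y_{Y∩Z}(B)
    (hincl : πZW '' (E : Set AZ) ⊆ πYW '' (B : Set AY)) :
    -- the fibres of B ⊕_{Y∩Z} E
    ((∀ (x : X) (hx : x ∈ Z),
        (πfib x) '' {a : A | πY a ∈ B ∧ πZ a ∈ E} = (πZx x hx) '' (E : Set AZ)) ∧
     (∀ (x : X) (hxZ : x ∉ Z) (hxY : x ∈ Y),
        (πfib x) '' {a : A | πY a ∈ B ∧ πZ a ∈ E} = (πYx x hxY) '' (B : Set AY))) ∧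
    -- exactness of 0 → {b ∈ B : π_{Y∩Z}(b) = 0} → B ⊕_{Y∩Z} E → E → 0
    (πZ '' {a : A | πY a ∈ B ∧ πZ a ∈ E} = (E : Set AZ)) ∧
    (∀ a₁ a₂ : A, πY a₁ ∈ B → πZ a₁ ∈ E → πY a₂ ∈ B → πZ a₂ ∈ E →
      πZ a₁ = 0 → πZ a₂ = 0 → πY a₁ = πY a₂ → a₁ = a₂) ∧
    (πY '' {a : A | (πY a ∈ B ∧ πZ a ∈ E) ∧ πZ a = 0} = {b : AY | b ∈ B ∧ πYW b = 0}) := by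
  classical
  have hYWapp : ∀ a : A, πYW (πY a) = πW a := fun a => by
    simpa using DFunLike.congr_fun hπYW a
  have hZWapp : ∀ a : A, πZW (πZ a) = πW a := fun a => by
    simpa using DFunLike.congr_fun hπZW a
  have hYxapp : ∀ (x : X) (hx : x ∈ Y) (a : A), πYx x hx (πY a) = πfib x a := fun x hx a => by
    simpa using DFunLike.congr_fun (hπYx x hx) a
  have hZxapp : ∀ (x : X) (hx : x ∈ Z) (a : A), πZx x hx (πZ a) = πfib x a := fun x hx a => by
    simpa using DFunLike.congr_fun (hπZx x hx) a
  have exact_surj : πZ '' {a : A | πY a ∈ B ∧ πZ a ∈ E} = (E : Set AZ) := by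
    apply Set.Subset.antisymm
    · rintro _ ⟨a, ⟨-, haE⟩, rfl⟩
      exact haE
    · intro e he
      obtain ⟨b, hbB, hbe⟩ := hincl ⟨e, he, rfl⟩
      obtain ⟨a', ha'⟩ := hAY.surjective b
      obtain ⟨a'', ha''⟩ := hAZ.surjective e
      have hwmem : (a' - a'') ∈ vanishingIdeal' (Y ∩ Z) := by
        apply (hAW.ker _).mp
        rw [map_sub, ← hYWapp a', ← hZWapp a'', ha', ha'', hbe, sub_self]
      obtain ⟨u, hu, v, hv, huv⟩ := aux_decomp hA hY hZ hwmem
      have hkeyY : πY u = 0 := (hAY.ker u).mpr hu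
      have hkeyZ : πZ v = 0 := (hAZ.ker v).mpr hv
      have haeq : a' - u = a'' + v := by
        rw [sub_eq_iff_eq_add] at huv ⊢
        rw [huv]; abel
      have hπZval : πZ (a' - u) = e := by
        rw [haeq, map_add, ha'', hkeyZ, add_zero]
      have hπYval : πY (a' - u) = b := by
        rw [map_sub, ha', hkeyY, sub_zero]
      exact ⟨a' - u, ⟨by rw [hπYval]; exact hbB, by rw [hπZval]; exact he⟩, hπZval⟩
  have hinj : ∀ a₁ a₂ : A, πY a₁ ∈ B → πZ a₁ ∈ E → πY a₂ ∈ B → πZ a₂ ∈ E →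
      πZ a₁ = 0 → πZ a₂ = 0 → πY a₁ = πY a₂ → a₁ = a₂ := by
    intro a₁ a₂ _ _ _ _ hz1 hz2 hy
    have h1 : (a₁ - a₂) ∈ vanishingIdeal' Y :=
      (hAY.ker _).mp (by rw [map_sub, hy, sub_self])
    have h2 : (a₁ - a₂) ∈ vanishingIdeal' Z :=
      (hAZ.ker _).mp (by rw [map_sub, hz1, hz2, sub_self])
    exact sub_eq_zero.mp (aux_inter hA hY hZ hYZ h1 h2)
  have part5 : πY '' {a : A | (πY a ∈ B ∧ πZ a ∈ E) ∧ πZ a = 0} =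
      {b : AY | b ∈ B ∧ πYW b = 0} := by
    apply Set.Subset.antisymm
    · rintro _ ⟨a, ⟨⟨haB, -⟩, haz⟩, rfl⟩
      refine ⟨haB, ?_⟩
      rw [hYWapp a, ← hZWapp a, haz, map_zero]
    · rintro b ⟨hbB, hb0⟩
      obtain ⟨a', ha'⟩ := hAY.surjective b
      have hwmem : a' ∈ vanishingIdeal' (Y ∩ Z) := by
        apply (hAW.ker _).mp
        rw [← hYWapp a', ha', hb0]
      obtain ⟨u, hu, v, hv, huv⟩ := aux_decomp hA hY hZ hwmem
      have hvz : πZ v = 0 := (hAZ.ker v).mpr hv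
      have huy : πY u = 0 := (hAY.ker u).mpr hu
      have hYv : πY v = b := by
        have hveq : v = a' - u := by rw [huv]; abel
        rw [hveq, map_sub, ha', huy, sub_zero]
      exact ⟨v, ⟨⟨by rw [hYv]; exact hbB, by rw [hvz]; exact zero_mem E⟩, hvz⟩, hYv⟩
  have fib1 : ∀ (x : X) (hx : x ∈ Z),
      (πfib x) '' {a : A | πY a ∈ B ∧ πZ a ∈ E} = (πZx x hx) '' (E : Set AZ) := by
    intro x hx
    apply Set.Subset.antisymm
    · rintro _ ⟨a, ⟨-, haE⟩, rfl⟩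
      exact ⟨πZ a, haE, hZxapp x hx a⟩
    · rintro _ ⟨e, he, rfl⟩
      rw [← exact_surj] at he
      obtain ⟨a, haS, hae⟩ := he
      exact ⟨a, haS, by rw [← hZxapp x hx a, hae]⟩
  have fib2 : ∀ (x : X) (hxZ : x ∉ Z) (hxY : x ∈ Y),
      (πfib x) '' {a : A | πY a ∈ B ∧ πZ a ∈ E} = (πYx x hxY) '' (B : Set AY) := by
    intro x hxZ hxY
    apply Set.Subset.antisymm
    · rintro _ ⟨a, ⟨haB, -⟩, rfl⟩
      exact ⟨πY a, haB, hYxapp x hxY a⟩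
    · rintro _ ⟨b, hbB, rfl⟩
      obtain ⟨kR, hk0, hk1, hk01⟩ := exists_continuous_zero_one_of_isClosed hZ
        (isClosed_singleton (x := x)) (Set.disjoint_singleton_right.mpr hxZ)
      set fC : C(X, ℂ) := ⟨fun y => ((kR y : ℝ) : ℂ),
        Complex.continuous_ofReal.comp kR.continuous⟩ with hfC
      have hfZ : ∀ y ∈ Z, fC y = 0 := fun y hy => by
        show ((kR y : ℝ) : ℂ) = 0
        rw [hk0 hy]
        norm_num
      have hfx : fC x = 1 := by
        show ((kR x : ℝ) : ℂ) = 1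
        rw [hk1 (Set.mem_singleton x)]
        norm_num
      obtain ⟨a₀, ha₀⟩ := hAY.surjective b
      refine ⟨fC • a₀, ⟨hBmod fC a₀ (by rw [ha₀]; exact hbB), ?_⟩, ?_⟩
      · have h0 : πZ (fC • a₀) = 0 := (hAZ.ker _).mpr (aux_gen_mem fC a₀ hfZ)
        rw [h0]
        exact zero_mem E
      · have hdiff : (fC • a₀ - a₀) ∈ vanishingIdeal' {x} := by
          have heq : fC • a₀ - a₀ = (fC - 1) • a₀ := by rw [sub_smul, one_smul]
          rw [heq]
          apply aux_gen_mem
          intro y hy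
          rw [Set.mem_singleton_iff] at hy
          subst hy
          simp [hfx]
        have h0 : πfib x (fC • a₀ - a₀) = 0 := ((hfib x).ker _).mpr hdiff
        rw [map_sub] at h0
        have heq2 : πfib x (fC • a₀) = πfib x a₀ := sub_eq_zero.mp h0
        rw [heq2, ← ha₀]
        exact (hYxapp x hxY a₀).symm
  exact ⟨⟨fib1, fib2⟩, exact_surj, hinj, part5⟩
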